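/- Lemma, Part a (closed form for the Neville-elimination matrices): For every stage 2 ≤ s ≤ n and all indices s ≤ i, j ≤ n, the stage-s matrix of the Neville elimination of V satisfies U(s)_{i,j} = σ² η^{(i−j)²} · (∏_{x=1}^{s−1} (1 − η^{2(j−x)})) · Σ, where Σ is the nested sum ∑_{k=0}^{i−s} ∑_{k₁=0}^{k} ∑_{k₂=0}^{k₁} ⋯ ∑_{k_{s−2}=0}^{k_{s−3}} η^{2(k(j−s) + k + k₁ + ⋯ + k_{s−2})} over (s−1)-tuples (k, k₁, …, k_{s−2}) (for s = 2 the sum is ∑_{k=0}^{i−2} η^{2(k(j−2)+k)}). -/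

import Mathlib

/-- The Gaussian-covariance kernel on 1-based indices:
`V σ θ δ i j = σ² e^{-θ (i-j)² δ²}`. -/
noncomputable def gaussV (σ θ δ : ℝ) (i j : ℕ) : ℝ :=
  σ ^ 2 * Real.exp (-θ * ((i : ℝ) - (j : ℝ)) ^ 2 * δ ^ 2)

/-- `nevilleU σ θ δ t` is the stage-`(t+1)` matrix `U(t+1)` (on 1-based indices) of the
Neville elimination of the Gaussian-covariance matrix: `U(1) = V`, and `U(s+1)` agrees
with `U(s)` in rows `1, …, s`, while for `i ≥ s + 1` one has `U(s+1)_{i,j} = 0` for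
`j ≤ s` and `U(s+1)_{i,j} = U(s)_{i,j} - U(s)_{i,s} U(s)_{s,j} / U(s)_{s,s}` for
`j ≥ s + 1`. -/
noncomputable def nevilleU (σ θ δ : ℝ) : ℕ → ℕ → ℕ → ℝ
  | 0, i, j => gaussV σ θ δ i j
  | t + 1, i, j =>
    if i ≤ t + 1 then nevilleU σ θ δ t i j
    else if j ≤ t + 1 then 0
    else nevilleU σ θ δ t i j -
      nevilleU σ θ δ t i (t + 1) * nevilleU σ θ δ t (t + 1) j /
        nevilleU σ θ δ t (t + 1) (t + 1)

/-- `chainSum x m top = ∑ x^(k₁+⋯+k_m)` over integer chains `0 ≤ k_m ≤ ⋯ ≤ k₁ ≤ top`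
(for `m = 0` the sum is `1 = x^0`, over the unique empty chain). -/
noncomputable def chainSum (x : ℝ) : ℕ → ℕ → ℝ
  | 0, _ => 1
  | m + 1, top => ∑ v ∈ Finset.range (top + 1), x ^ v * chainSum x m v

/-!
Write `η = e^{-θδ²}` and `x = η²`. By induction on the number `t` of elimination steps,
`U(t+1)_{i,j} = σ² η^{(i-j)²} ∏_{l=1}^{t} (1 - η^{2(j-l)}) · W_t(j-t-1, i-t-1)`, where `W_t(b, a)` is
the sum of `x^{k₁ b + k₁ + ⋯ + k_t}` over the chains `0 ≤ k_t ≤ ⋯ ≤ k₁ ≤ a` (`weightedChainSum`);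
for `t = 0` this is `V` itself. Since `(p - q)² = p² + q² - 2pq`, the subtracted term of an elimination step is
`σ² η^{(i-j)²} ∏ · x^{(i-t-1)(j-t-1)} W_t(0, i-t-1)`, and a summation by parts in the outermost index
turns `W_t(b+1, a+1) - x^{(a+1)(b+1)} W_t(0, a+1)` into `(1 - x^{b+1}) W_{t+1}(b, a)`, which supplies the
next factor of the product.
-/

open Finset

lemma chainSum_top_zero (x : ℝ) (m : ℕ) : chainSum x m 0 = 1 := by
  induction m with
  | zero => rfl
  | succ m ih => simp [chainSum, ih]

lemma chainSum_succ_top (x : ℝ) (m a : ℕ) :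
    chainSum x (m + 1) (a + 1) = chainSum x (m + 1) a + x ^ (a + 1) * chainSum x m (a + 1) := by
  rw [chainSum, chainSum, sum_range_succ]

lemma sum_range_pow_mul_chainSum (x : ℝ) (m b : ℕ) :
    ∀ a : ℕ, ∑ k ∈ range (a + 1), x ^ (k * b + k) * chainSum x m k =
      x ^ (a * b) * chainSum x (m + 1) a +
        (1 - x ^ b) * ∑ k ∈ range a, x ^ (k * b) * chainSum x (m + 1) k
  | 0 => by simp [chainSum, chainSum_top_zero]
  | a + 1 => by
    rw [sum_range_succ, sum_range_pow_mul_chainSum x m b a, sum_range_succ, chainSum_succ_top]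
    ring

noncomputable def weightedChainSum (x : ℝ) (b : ℕ) : ℕ → ℕ → ℝ
  | 0, _ => 1
  | m + 1, top => ∑ k ∈ range (top + 1), x ^ (k * b + k) * chainSum x m k

lemma weightedChainSum_zero_weight (x : ℝ) (m top : ℕ) :
    weightedChainSum x 0 m top = chainSum x m top := by
  cases m <;> simp [weightedChainSum, chainSum]

lemma weightedChainSum_top_zero (x : ℝ) (b m : ℕ) : weightedChainSum x b m 0 = 1 := by
  cases m <;> simp [weightedChainSum, chainSum_top_zero]

lemma weightedChainSum_succ_succ (x : ℝ) (b m a : ℕ) :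
    weightedChainSum x (b + 1) m (a + 1) =
      x ^ ((a + 1) * (b + 1)) * chainSum x m (a + 1) +
        (1 - x ^ (b + 1)) * weightedChainSum x b (m + 1) a := by
  cases m with
  | zero =>
    have hgeom := geom_sum_mul (x ^ (b + 1)) (a + 1)
    simp only [weightedChainSum, chainSum, mul_one, ← pow_mul, ← mul_add_one] at hgeom ⊢
    simp only [mul_comm _ (b + 1)] at hgeom ⊢
    linear_combination hgeom
  | succ m =>
    rw [weightedChainSum, weightedChainSum, sum_range_pow_mul_chainSum]
    simp only [mul_add_one]

lemma zpow_sq_mul_zpow_sq {η : ℝ} (hη : η ≠ 0) (a b : ℕ) :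
    η ^ ((a : ℤ) ^ 2) * η ^ ((b : ℤ) ^ 2) = η ^ (((a : ℤ) - b) ^ 2) * (η ^ 2) ^ (a * b) := by
  rw [← pow_mul, ← zpow_natCast, ← zpow_add₀ hη, ← zpow_add₀ hη]
  congr 1
  push_cast
  ring

/-- The claimed value of `U(t+1)_{i,j}`, i.e. of `nevilleU σ θ δ t i j` with `η = e^{-θδ²}`. -/
noncomputable def nevilleClosedForm (σ η : ℝ) (t i j : ℕ) : ℝ :=
  σ ^ 2 * η ^ (((i : ℤ) - j) ^ 2) * (∏ l ∈ Icc 1 t, (1 - η ^ (2 * (j - l)))) *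
    weightedChainSum (η ^ 2) (j - t - 1) t (i - t - 1)

lemma nevilleClosedForm_step {σ η : ℝ} (hσ : σ ≠ 0) (hη0 : 0 < η) (hη1 : η < 1) {t i j : ℕ}
    (hi : t + 2 ≤ i) (hj : t + 2 ≤ j) :
    nevilleClosedForm σ η t i j -
        nevilleClosedForm σ η t i (t + 1) * nevilleClosedForm σ η t (t + 1) j /
          nevilleClosedForm σ η t (t + 1) (t + 1) =
      nevilleClosedForm σ η (t + 1) i j := by
  obtain ⟨a, rfl⟩ : ∃ a, i = t + 2 + a := ⟨i - (t + 2), by omega⟩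
  obtain ⟨b, rfl⟩ : ∃ b, j = t + 2 + b := ⟨j - (t + 2), by omega⟩
  have hpivot : ∏ l ∈ Icc 1 t, (1 - η ^ (2 * (t + 1 - l))) ≠ 0 := by
    refine (prod_pos fun l hl => ?_).ne'
    have : η ^ (2 * (t + 1 - l)) < 1 := pow_lt_one₀ hη0.le hη1 (by rw [mem_Icc] at hl; omega)
    linarith
  have hsq : η ^ ((((t + 2 + a : ℕ) : ℤ) - (t + 1 : ℕ)) ^ 2) *
        η ^ ((((t + 1 : ℕ) : ℤ) - (t + 2 + b : ℕ)) ^ 2) =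
      η ^ ((((t + 2 + a : ℕ) : ℤ) - (t + 2 + b : ℕ)) ^ 2) * (η ^ 2) ^ ((a + 1) * (b + 1)) := by
    convert zpow_sq_mul_zpow_sq hη0.ne' (a + 1) (b + 1) using 3 <;> push_cast <;> ring
  simp only [nevilleClosedForm, show t + 2 + a - t - 1 = a + 1 by omega,
    show t + 2 + b - t - 1 = b + 1 by omega, show t + 1 - t - 1 = 0 by omega,
    show t + 2 + a - (t + 1) - 1 = a by omega, show t + 2 + b - (t + 1) - 1 = b by omega,
    weightedChainSum_top_zero, weightedChainSum_zero_weight, weightedChainSum_succ_succ,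
    prod_Icc_succ_top (Nat.le_add_left 1 t), show 2 * (t + 2 + b - (t + 1)) = 2 * (b + 1) by omega,
    sub_self, zero_pow two_ne_zero, zpow_zero, pow_mul η 2 (b + 1)]
  field_simp
  linear_combination
    -(∏ l ∈ Icc 1 t, (1 - η ^ (2 * (t + 2 + b - l)))) * chainSum (η ^ 2) t (a + 1) * hsq

lemma nevilleU_succ_of_lt (σ θ δ : ℝ) {t i j : ℕ} (hi : t + 1 < i) (hj : t + 1 < j) :
    nevilleU σ θ δ (t + 1) i j =
      nevilleU σ θ δ t i j -
        nevilleU σ θ δ t i (t + 1) * nevilleU σ θ δ t (t + 1) j /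
          nevilleU σ θ δ t (t + 1) (t + 1) := by
  rw [nevilleU, if_neg hi.not_ge, if_neg hj.not_ge]

lemma gaussV_eq_exp_zpow (σ θ δ : ℝ) (i j : ℕ) :
    gaussV σ θ δ i j = σ ^ 2 * Real.exp (-θ * δ ^ 2) ^ (((i : ℤ) - j) ^ 2) := by
  rw [gaussV, ← Real.rpow_intCast, ← Real.exp_mul]
  push_cast
  ring_nf

lemma nevilleU_eq_nevilleClosedForm {σ θ δ : ℝ} (hσ : σ ≠ 0) (hθ : 0 < θ) (hδ : 0 < δ) :
    ∀ t i j : ℕ, t + 1 ≤ i → t + 1 ≤ j →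
      nevilleU σ θ δ t i j = nevilleClosedForm σ (Real.exp (-θ * δ ^ 2)) t i j
  | 0, i, j, _, _ => by
    simp [nevilleU, nevilleClosedForm, weightedChainSum, gaussV_eq_exp_zpow]
  | t + 1, i, j, hi, hj => by
    have hη1 : Real.exp (-θ * δ ^ 2) < 1 := Real.exp_lt_one_iff.2 (by nlinarith [pow_pos hδ 2])
    have ih := nevilleU_eq_nevilleClosedForm hσ hθ hδ t
    rw [nevilleU_succ_of_lt σ θ δ hi hj, ih i j (by omega) (by omega), ih i (t + 1) (by omega) le_rfl,
      ih (t + 1) j le_rfl (by omega), ih (t + 1) (t + 1) le_rfl le_rfl]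
    exact nevilleClosedForm_step hσ (Real.exp_pos _) hη1 hi hj

theorem neville_closed_form_general (σ θ δ : ℝ)
    (hσ : 0 < σ) (hθ : 0 < θ) (hδ : 0 < δ) (s i j : ℕ)
    (hs2 : 2 ≤ s) (hsi : s ≤ i) (hsj : s ≤ j) :
    nevilleU σ θ δ (s - 1) i j =
      σ ^ 2 * Real.exp (-θ * δ ^ 2) ^ (((i : ℤ) - (j : ℤ)) ^ 2) *
        (∏ x ∈ Finset.Icc 1 (s - 1), (1 - Real.exp (-θ * δ ^ 2) ^ (2 * (j - x)))) *
        (∑ k ∈ Finset.range (i - s + 1),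
          (Real.exp (-θ * δ ^ 2) ^ 2) ^ (k * (j - s) + k) *
            chainSum (Real.exp (-θ * δ ^ 2) ^ 2) (s - 2) k) := by
  obtain ⟨t, rfl⟩ : ∃ t, s = t + 2 := ⟨s - 2, by omega⟩
  exact nevilleU_eq_nevilleClosedForm hσ.ne' hθ hδ (t + 1) i j (by omega) (by omega)

/-- Lemma, Part a (closed form for the Neville-elimination matrices): for every stage
`2 ≤ s ≤ n` and indices `s ≤ i, j ≤ n`,
`U(s)_{i,j} = σ² η^{(i-j)²} ∏_{x=1}^{s-1} (1 - η^{2(j-x)}) ·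
  ∑_{k=0}^{i-s} ∑_{k₁=0}^{k} ⋯ ∑_{k_{s-2}=0}^{k_{s-3}} η^{2(k(j-s)+k+k₁+⋯+k_{s-2})}`,
where `η = e^{-θδ²}`. -/
theorem neville_closed_form (n : ℕ) (σ θ δ : ℝ) (hn : 1 ≤ n)
    (hσ : 0 < σ) (hθ : 0 < θ) (hδ : 0 < δ) (s i j : ℕ)
    (hs2 : 2 ≤ s) (hsn : s ≤ n) (hsi : s ≤ i) (hin : i ≤ n) (hsj : s ≤ j) (hjn : j ≤ n) :
    nevilleU σ θ δ (s - 1) i j =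
      σ ^ 2 * Real.exp (-θ * δ ^ 2) ^ (((i : ℤ) - (j : ℤ)) ^ 2) *
        (∏ x ∈ Finset.Icc 1 (s - 1), (1 - Real.exp (-θ * δ ^ 2) ^ (2 * (j - x)))) *
        (∑ k ∈ Finset.range (i - s + 1),
          (Real.exp (-θ * δ ^ 2) ^ 2) ^ (k * (j - s) + k) *
            chainSum (Real.exp (-θ * δ ^ 2) ^ 2) (s - 2) k) :=
  neville_closed_form_general σ θ δ hσ hθ hδ s i j hs2 hsi hsj
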